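/- Let D be a dataset on ground set I, and let K ⊆ D with |K| = ℓ be shattered by the ranges R = {T_D(A) : ∅ ≠ A ⊆ I}. Then every transaction τ ∈ K has length at least ℓ, i.e., |τ| ≥ |K|. -/

import Mathlib

open Finset

def suppSet {α : Type*} [DecidableEq α] (D : Finset (Finset α)) (A : Finset α) :
    Finset (Finset α) :=
  D.filter (fun τ => A ⊆ τ)

def Shattered {α : Type*} [DecidableEq α] (D K : Finset (Finset α)) : Prop :=
  ∀ B ⊆ K, ∃ A : Finset α, A.Nonempty ∧ suppSet D A ∩ K = B

/-!
Fix `τ ∈ K`. Each of the `2 ^ (|K| - 1)` subsets `B ⊆ K` containing `τ` (the interval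
`Icc {τ} K`) is cut out of `K` by the support of some nonempty itemset `A`; as `τ ∈ B`, that `A`
is a nonempty subset of `τ` (the interval `Ioc ∅ τ`), and distinct `B` need distinct `A`.
Hence `2 ^ (|K| - 1) ≤ 2 ^ |τ| - 1`, i.e. `|K| ≤ |τ|`.
-/

section

variable {α : Type*} [DecidableEq α] {D K : Finset (Finset α)} {A τ : Finset α}

@[simp]
theorem mem_suppSet : τ ∈ suppSet D A ↔ τ ∈ D ∧ A ⊆ τ :=
  mem_filter

namespace Shattered

theorem Icc_singleton_subset_image (hsh : Shattered D K) :
    Icc {τ} K ⊆ (Ioc ∅ τ).image (fun A => suppSet D A ∩ K) := by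
  intro B hB
  rw [mem_Icc, singleton_subset_iff] at hB
  obtain ⟨A, hA, hAB⟩ := hsh B hB.2
  have hAτ : A ⊆ τ := (mem_suppSet.mp (mem_inter.mp (hAB ▸ hB.1)).1).2
  exact mem_image.mpr ⟨A, mem_Ioc.mpr ⟨empty_ssubset.mpr hA, hAτ⟩, hAB⟩

theorem two_pow_card_sub_one_lt (hsh : Shattered D K) (hτ : τ ∈ K) :
    2 ^ (#K - 1) < 2 ^ #τ :=
  calc 2 ^ (#K - 1) = #(Icc {τ} K) := by
        rw [card_Icc_finset (singleton_subset_iff.mpr hτ), card_singleton]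
    _ ≤ #(Ioc ∅ τ) := (card_le_card hsh.Icc_singleton_subset_image).trans card_image_le
    _ = 2 ^ #τ - 1 := by rw [card_Ioc_finset (empty_subset τ), card_empty, Nat.sub_zero]
    _ < 2 ^ #τ := Nat.sub_lt (Nat.two_pow_pos _) one_pos

end Shattered

end

theorem shattered_card_le_length_general {α : Type*} [DecidableEq α]
    (D K : Finset (Finset α)) (hsh : Shattered D K) :
    ∀ τ ∈ K, K.card ≤ τ.card := by
  intro τ hτ
  have hlt : #K - 1 < #τ :=
    (Nat.pow_lt_pow_iff_right (by norm_num)).mp (hsh.two_pow_card_sub_one_lt hτ)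
  have hpos : 0 < #K := card_pos.mpr ⟨τ, hτ⟩
  omega

/-- if `K ⊆ D` is shattered by the ranges, every transaction `τ ∈ K`
has length at least `|K|`. -/
theorem shattered_card_le_length {α : Type*} [DecidableEq α]
    (D K : Finset (Finset α)) (hK : K ⊆ D) (hsh : Shattered D K) :
    ∀ τ ∈ K, K.card ≤ τ.card :=
  shattered_card_le_length_general D K hsh
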